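/- arXiv:2412.03238 — 11 statements merged into one kernel-verified Lean document; each statement's English description precedes it below -/
import Mathlib

section
/- Let (X, dist) be a metric space, P ⊆ X a finite set of points, and k ≥ 1 an integer. Suppose S* ⊆ P is a nonempty subset with |S*| ≤ k such that every point p ∈ P satisfies dist(p, S*) ≤ R*. Then for every real r ≥ 2R*, every subset T ⊆ P whose pairwise distances between distinct points are strictly greater than r satisfies |T| ≤ k. -/
/-- In a metric space, if a nonempty `S* ⊆ P` with `|S*| ≤ k` covers `P`
within radius `R*`, then for every `r ≥ 2R*`, any subset `T ⊆ P` whose pairwise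
distances between distinct points are strictly greater than `r` has `|T| ≤ k`. -/
theorem kcenter_independent_card_le
    {X : Type*} [MetricSpace X] (P : Finset X) (k : ℕ) (hk : 1 ≤ k)
    (Sstar : Finset X) (hSsub : Sstar ⊆ P) (hSne : Sstar.Nonempty)
    (hScard : Sstar.card ≤ k) (Rstar : ℝ)
    (hcov : ∀ p ∈ P, Metric.infDist p (Sstar : Set X) ≤ Rstar)
    (r : ℝ) (hr : 2 * Rstar ≤ r)
    (T : Finset X) (hTsub : T ⊆ P)
    (hT : ∀ x ∈ T, ∀ y ∈ T, x ≠ y → r < dist x y) :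
    T.card ≤ k := by
  have hnear : ∀ t ∈ T, ∃ s ∈ Sstar, dist t s ≤ Rstar := by
    intro t ht
    obtain ⟨s, hs, hds⟩ := Sstar.finite_toSet.isCompact.exists_infDist_eq_dist
      (by exact_mod_cast hSne.to_set) t
    exact ⟨s, hs, by rw [← hds]; exact hcov t (hTsub ht)⟩
  classical
  choose f hfS hfd using hnear
  calc T.card ≤ Sstar.card := by
        apply Finset.card_le_card_of_injOn (fun t => if h : t ∈ T then f t h else t)
        · intro t ht
          simp only [Finset.mem_coe] at ht
          simp only [dif_pos ht]
          exact hfS t ht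
        · intro x hx y hy hxy
          simp only [Finset.mem_coe] at hx hy
          simp only [dif_pos hx, dif_pos hy] at hxy
          by_contra hne
          have hlt := hT x hx y hy hne
          have : dist x y ≤ 2 * Rstar := by
            calc dist x y ≤ dist x (f x hx) + dist (f x hx) y := dist_triangle _ _ _
              _ = dist x (f x hx) + dist y (f y hy) := by rw [hxy, dist_comm (f y hy) y]
              _ ≤ Rstar + Rstar := add_le_add (hfd x hx) (hfd y hy)
              _ = 2 * Rstar := by ring
          linarith
    _ ≤ k := hScard
end

section
/- Let (X, dist) be a metric space, P ⊆ X a finite set of points, and k ≥ 1 an integer. Suppose S* ⊆ P is a nonempty subset with |S*| ≤ k such that every point p ∈ P satisfies dist(p, S*) ≤ R*. If there exists a subset T ⊆ P with |T| ≥ k + 1 whose pairwise distances between distinct points are strictly greater than r, then r < 2R*. -/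
/-- In a metric space, if a nonempty `S* ⊆ P` with `|S*| ≤ k` covers `P`
within radius `R*`, and there is a subset `T ⊆ P` with `|T| ≥ k + 1` whose pairwise
distances between distinct points are strictly greater than `r`, then `r < 2R*`. -/
theorem kcenter_large_independent_lt
    {X : Type*} [MetricSpace X] (P : Finset X) (k : ℕ) (hk : 1 ≤ k)
    (Sstar : Finset X) (hSsub : Sstar ⊆ P) (hSne : Sstar.Nonempty)
    (hScard : Sstar.card ≤ k) (Rstar : ℝ)
    (hcov : ∀ p ∈ P, Metric.infDist p (Sstar : Set X) ≤ Rstar)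
    (r : ℝ) (T : Finset X) (hTsub : T ⊆ P) (hTcard : k + 1 ≤ T.card)
    (hT : ∀ x ∈ T, ∀ y ∈ T, x ≠ y → r < dist x y) :
    r < 2 * Rstar := by
  -- assign each t ∈ T a nearest center
  have hnear : ∀ t : X, ∃ s, t ∈ T → s ∈ Sstar ∧ dist t s ≤ Rstar := by
    intro t
    by_cases ht : t ∈ T
    · obtain ⟨s, hs, hds⟩ := (Sstar.finite_toSet.isCompact).exists_infDist_eq_dist
        (by exact_mod_cast hSne) t
      exact ⟨s, fun _ => ⟨by exact_mod_cast hs, hds ▸ hcov t (hTsub ht)⟩⟩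
    · exact ⟨hSne.choose, fun h => absurd h ht⟩
  choose f hf using hnear
  have : Sstar.card < T.card := lt_of_le_of_lt hScard (Nat.lt_of_succ_le (by omega))
  obtain ⟨x, hx, y, hy, hxy, hfe⟩ :=
    Finset.exists_ne_map_eq_of_card_lt_of_maps_to this (fun t ht => (hf t ht).1)
  calc r < dist x y := hT x hx y hy hxy
    _ ≤ dist x (f x) + dist (f y) y := by
        rw [hfe]; simpa [dist_comm] using dist_triangle x (f y) y
    _ ≤ Rstar + Rstar := add_le_add (hf x hx).2 (by rw [dist_comm]; exact (hf y hy).2)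
    _ = 2 * Rstar := by ring
end

section
/- Let (X, dist) be a metric space, P ⊆ X a finite set of points, and k ≥ 1 an integer. Suppose S* ⊆ P is a nonempty subset with |S*| ≤ k such that every point p ∈ P satisfies dist(p, S*) ≤ R*. If there exists a subset T ⊆ P with |T| ≥ k + 1 whose pairwise distances between distinct points are at least r, then r ≤ 2R*. -/
/-- In a metric space, if a nonempty `S* ⊆ P` with `|S*| ≤ k` covers `P`
within radius `R*`, and there is a subset `T ⊆ P` with `|T| ≥ k + 1` whose pairwise
distances between distinct points are at least `r`, then `r ≤ 2R*`. -/
theorem kcenter_large_separated_le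
    {X : Type*} [MetricSpace X] (P : Finset X) (k : ℕ) (hk : 1 ≤ k)
    (Sstar : Finset X) (hSsub : Sstar ⊆ P) (hSne : Sstar.Nonempty)
    (hScard : Sstar.card ≤ k) (Rstar : ℝ)
    (hcov : ∀ p ∈ P, Metric.infDist p (Sstar : Set X) ≤ Rstar)
    (r : ℝ) (T : Finset X) (hTsub : T ⊆ P) (hTcard : k + 1 ≤ T.card)
    (hT : ∀ x ∈ T, ∀ y ∈ T, x ≠ y → r ≤ dist x y) :
    r ≤ 2 * Rstar := by
  classical
  have hatt : ∀ p ∈ P, ∃ s ∈ Sstar, dist p s ≤ Rstar := by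
    intro p hp
    have hc : IsCompact (Sstar : Set X) := Sstar.finite_toSet.isCompact
    obtain ⟨s, hs, hds⟩ := hc.exists_infDist_eq_dist (by exact_mod_cast hSne) p
    exact ⟨s, hs, by rw [← hds]; exact hcov p hp⟩
  choose f hf hfd using hatt
  have hmap : ∀ t ∈ T, (fun t => if h : t ∈ P then f t h else hSne.choose) t ∈ Sstar := by
    intro t ht
    simp only [dif_pos (hTsub ht)]
    exact hf t (hTsub ht)
  obtain ⟨x, hx, y, hy, hxy, heq⟩ :=
    Finset.exists_ne_map_eq_of_card_lt_of_maps_to (lt_of_lt_of_le (by omega) hTcard) hmap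
  have hxP := hTsub hx
  have hyP := hTsub hy
  simp only [dif_pos hxP, dif_pos hyP] at heq
  calc r ≤ dist x y := hT x hx y hy hxy
    _ ≤ dist x (f x hxP) + dist (f y hyP) y := by
        rw [heq]; simpa [dist_comm] using dist_triangle x (f y hyP) y
    _ ≤ Rstar + Rstar := add_le_add (hfd x hxP) (by rw [dist_comm]; exact hfd y hyP)
    _ = 2 * Rstar := by ring
end

section
/- Let (X, dist) be a metric space, P ⊆ X a nonempty finite set of points, and k ≥ 1 an integer. Suppose S* ⊆ P is a nonempty subset with |S*| ≤ k such that every point p ∈ P satisfies dist(p, S*) ≤ R*, and suppose R* > 0. If S ⊆ P is a nonempty maximal distance-(2R*) independent set in P, then |S| ≤ k and every point p ∈ P satisfies dist(p, S) ≤ 2R*; that is, S is a feasible k-center solution whose cost is at most twice the optimal cost. -/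
open Metric

/-- Sending each point of `S` to a point of `T` within `r` is injective, since two points of `S`
with a common image would be at distance at most `2 * r`. -/
theorem Finset.card_le_card_of_separated_of_forall_exists_dist_le {X : Type*} [PseudoMetricSpace X]
    {S T : Finset X} {r : ℝ} (hsep : ∀ x ∈ S, ∀ y ∈ S, x ≠ y → 2 * r < dist x y)
    (hnear : ∀ s ∈ S, ∃ t ∈ T, dist s t ≤ r) : S.card ≤ T.card := by
  refine Finset.card_le_card_of_forall_subsingleton (fun s t => dist s t ≤ r) hnear ?_
  rintro t - x ⟨hx, hxt⟩ y ⟨hy, hyt⟩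
  by_contra hxy
  have hclose : dist x y ≤ 2 * r := calc
    dist x y ≤ dist x t + dist y t := dist_triangle_right x y t
    _ ≤ 2 * r := by linarith
  exact (hsep x hx y hy hxy).not_ge hclose

theorem Finset.exists_dist_le_of_infDist_le {X : Type*} [PseudoMetricSpace X] {T : Finset X}
    (hT : T.Nonempty) {p : X} {r : ℝ} (h : infDist p (T : Set X) ≤ r) :
    ∃ t ∈ T, dist p t ≤ r := by
  obtain ⟨t, ht, hdist⟩ := T.finite_toSet.isCompact.exists_infDist_eq_dist (by exact_mod_cast hT) p
  exact ⟨t, ht, hdist ▸ h⟩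

theorem Metric.infDist_le_of_notMem_imp_exists_dist_le {X : Type*} [PseudoMetricSpace X]
    {S : Set X} {p : X} {r : ℝ} (hr : 0 ≤ r) (h : p ∉ S → ∃ s ∈ S, dist p s ≤ r) :
    infDist p S ≤ r := by
  by_cases hp : p ∈ S
  · rwa [infDist_zero_of_mem hp]
  · obtain ⟨s, hs, hps⟩ := h hp
    exact (infDist_le_dist_of_mem hs).trans hps

theorem maximal_independent_two_approx_general
    {X : Type*} [MetricSpace X] (P : Finset X) (k : ℕ)
    (Sstar : Finset X) (hSne : Sstar.Nonempty)
    (hScard : Sstar.card ≤ k) (Rstar : ℝ)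
    (hcov : ∀ p ∈ P, Metric.infDist p (Sstar : Set X) ≤ Rstar)
    (S : Finset X) (hSsub' : S ⊆ P)
    (hind : ∀ x ∈ S, ∀ y ∈ S, x ≠ y → 2 * Rstar < dist x y)
    (hmax : ∀ q ∈ P, q ∉ S → ∃ s ∈ S, dist q s ≤ 2 * Rstar) :
    S.card ≤ k ∧ ∀ p ∈ P, Metric.infDist p (S : Set X) ≤ 2 * Rstar := by
  constructor
  · have hnear : ∀ s ∈ S, ∃ c ∈ Sstar, dist s c ≤ Rstar := fun s hs =>
      Finset.exists_dist_le_of_infDist_le hSne (hcov s (hSsub' hs))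
    exact (Finset.card_le_card_of_separated_of_forall_exists_dist_le hind hnear).trans hScard
  · intro p hp
    have hR : 0 ≤ Rstar := infDist_nonneg.trans (hcov p hp)
    exact infDist_le_of_notMem_imp_exists_dist_le (by positivity) (hmax p hp)

/-- If a nonempty `S* ⊆ P` with `|S*| ≤ k` covers `P` within radius
`R* > 0`, then any nonempty maximal distance-`2R*` independent set `S` in `P` has
`|S| ≤ k` and covers `P` within radius `2R*` (a `2`-approximate `k`-center solution). -/
theorem maximal_independent_two_approx
    {X : Type*} [MetricSpace X] (P : Finset X) (hP : P.Nonempty) (k : ℕ) (hk : 1 ≤ k)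
    (Sstar : Finset X) (hSsub : Sstar ⊆ P) (hSne : Sstar.Nonempty)
    (hScard : Sstar.card ≤ k) (Rstar : ℝ) (hR : 0 < Rstar)
    (hcov : ∀ p ∈ P, Metric.infDist p (Sstar : Set X) ≤ Rstar)
    (S : Finset X) (hSsub' : S ⊆ P) (hSne' : S.Nonempty)
    (hind : ∀ x ∈ S, ∀ y ∈ S, x ≠ y → 2 * Rstar < dist x y)
    (hmax : ∀ q ∈ P, q ∉ S → ∃ s ∈ S, dist q s ≤ 2 * Rstar) :
    S.card ≤ k ∧ ∀ p ∈ P, Metric.infDist p (S : Set X) ≤ 2 * Rstar :=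
  maximal_independent_two_approx_general P k Sstar hSne hScard Rstar hcov S hSsub' hind hmax
end

section
/- Let (X, dist) be a metric space, P ⊆ X a finite set of points, k ≥ 1 an integer, and r > 0, ρ > 0 real numbers. Suppose S ⊆ P with |S| = k satisfies: (i) every point p ∈ P has dist(p, S) ≤ r, and (ii) there exists a point p_S ∈ P \ S such that the pairwise distances between distinct points of S ∪ {p_S} are strictly greater than 2r/ρ. Then S is a ρ-approximate k-center solution: for every nonempty T ⊆ P with |T| ≤ k, max_{p ∈ P} dist(p, S) ≤ ρ · max_{p ∈ P} dist(p, T). -/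
/-- The cost (covering radius) of a candidate center set `S` for the point set `P`:
the maximum over `p ∈ P` of the distance from `p` to `S`. -/
noncomputable def kcCost {X : Type*} [MetricSpace X] (P : Finset X) (S : Set X) : ℝ :=
  sSup ((fun p => Metric.infDist p S) '' (P : Set X))

/-- If `|S| = k`, `S` covers `P` within radius `r`, and there is a point
`p_S ∈ P \ S` such that the pairwise distances between distinct points of `S ∪ {p_S}`
exceed `2r/ρ`, then `S` is a `ρ`-approximate `k`-center solution. -/
theorem invariants_give_rho_approx
    {X : Type*} [MetricSpace X] (P : Finset X) (k : ℕ) (hk : 1 ≤ k)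
    (r ρ : ℝ) (hr : 0 < r) (hρ : 0 < ρ)
    (S : Finset X) (hSsub : S ⊆ P) (hScard : S.card = k)
    (hcov : ∀ p ∈ P, Metric.infDist p (S : Set X) ≤ r)
    (pS : X) (hpSP : pS ∈ P) (hpSS : pS ∉ S)
    (hsep : ∀ x ∈ insert pS (S : Set X), ∀ y ∈ insert pS (S : Set X), x ≠ y → 2 * r / ρ < dist x y) :
    ∀ T : Finset X, T ⊆ P → T.Nonempty → T.card ≤ k →
      kcCost P (S : Set X) ≤ ρ * kcCost P (T : Set X) := by
  intro T hTsub hTne hTcard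
  set c := kcCost P (T : Set X) with hc
  -- cost of S is at most r
  have hSr : kcCost P (S : Set X) ≤ r := by
    apply Real.sSup_le _ hr.le
    rintro x ⟨p, hp, rfl⟩
    exact hcov p (by exact_mod_cast hp)
  -- each point of P is within c of T
  have hbdd : BddAbove ((fun p => Metric.infDist p (T : Set X)) '' (P : Set X)) :=
    (P.finite_toSet.image _).bddAbove
  have hle : ∀ q ∈ P, Metric.infDist q (T : Set X) ≤ c := fun q hq =>
    le_csSup hbdd ⟨q, by exact_mod_cast hq, rfl⟩
  -- nearest center function
  have hTc : IsCompact (T : Set X) := T.finite_toSet.isCompact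
  have hTne' : (T : Set X).Nonempty := by exact_mod_cast hTne
  have hnear : ∀ q : X, ∃ t ∈ (T : Set X), Metric.infDist q (T : Set X) = dist q t :=
    fun q => hTc.exists_infDist_eq_dist hTne' q
  classical
  let f : X → X := fun q => (hnear q).choose
  have hfT : ∀ q : X, f q ∈ T := fun q => (hnear q).choose_spec.1
  have hfd : ∀ q : X, Metric.infDist q (T : Set X) = dist q (f q) :=
    fun q => (hnear q).choose_spec.2
  -- pigeonhole on insert pS S
  have hcard : T.card < (insert pS S).card := by
    rw [Finset.card_insert_of_notMem hpSS, hScard]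
    omega
  obtain ⟨x, hx, y, hy, hxy, hfxy⟩ :=
    Finset.exists_ne_map_eq_of_card_lt_of_maps_to hcard (fun q _ => hfT q)
  have hxP : x ∈ P := by
    rcases Finset.mem_insert.mp hx with h | h
    · exact h ▸ hpSP
    · exact hSsub h
  have hyP : y ∈ P := by
    rcases Finset.mem_insert.mp hy with h | h
    · exact h ▸ hpSP
    · exact hSsub h
  have hsep' : 2 * r / ρ < dist x y := by
    apply hsep x _ y _ hxy
    · simpa using Finset.mem_insert.mp hx
    · simpa using Finset.mem_insert.mp hy
  have h2 : dist x y ≤ 2 * c := by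
    calc dist x y ≤ dist x (f x) + dist (f y) y := by
          rw [hfxy]; exact dist_triangle x (f y) y
      _ = Metric.infDist x (T : Set X) + Metric.infDist y (T : Set X) := by
          rw [hfd x, hfd y, dist_comm (f y) y]
      _ ≤ c + c := add_le_add (hle x hxP) (hle y hyP)
      _ = 2 * c := by ring
  have hrc : r ≤ ρ * c := by
    have : 2 * r / ρ < 2 * c := lt_of_lt_of_le hsep' h2
    rw [div_lt_iff₀ hρ] at this
    nlinarith
  exact hSr.trans hrc
end

section
/- Let (X, dist) be a metric space, P ⊆ X a finite set of points, k ≥ 1 an integer, and r > 0. Suppose S ⊆ P with |S| = k satisfies: (i) there exists a point p_S ∈ P \ S such that the pairwise distances between distinct points of S ∪ {p_S} are strictly greater than r, and (ii) every point p ∈ P has dist(p, S) ≤ 25r. Then S is a 50-approximate k-center solution: for every nonempty T ⊆ P with |T| ≤ k, max_{p ∈ P} dist(p, S) ≤ 50 · max_{p ∈ P} dist(p, T). -/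
/-- If `|S| = k`, there is `p_S ∈ P \ S` with the pairwise distances of
`S ∪ {p_S}` strictly greater than `r`, and `S` covers `P` within radius `25r`, then
`S` is a `50`-approximate `k`-center solution (fully dynamic algorithm guarantee). -/
theorem fully_dynamic_fifty_approx
    {X : Type*} [MetricSpace X] (P : Finset X) (k : ℕ) (hk : 1 ≤ k)
    (r : ℝ) (hr : 0 < r)
    (S : Finset X) (hSsub : S ⊆ P) (hScard : S.card = k)
    (pS : X) (hpSP : pS ∈ P) (hpSS : pS ∉ S)
    (hsep : ∀ x ∈ insert pS (S : Set X), ∀ y ∈ insert pS (S : Set X), x ≠ y → r < dist x y)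
    (hcov : ∀ p ∈ P, Metric.infDist p (S : Set X) ≤ 25 * r) :
    ∀ T : Finset X, T ⊆ P → T.Nonempty → T.card ≤ k →
      kcCost P (S : Set X) ≤ 50 * kcCost P (T : Set X) := by
  classical
  intro T hTsub hTne hTcard
  -- upper bound on cost of S
  have hcostS : kcCost P (S : Set X) ≤ 25 * r := by
    apply Real.sSup_le
    · rintro v ⟨p, hp, rfl⟩
      exact hcov p (by exact_mod_cast hp)
    · positivity
  -- nearest point map into T
  have hT : ∀ x : X, ∃ t ∈ (T : Set X), Metric.infDist x (T : Set X) = dist x t :=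
    fun x => (T.finite_toSet.isCompact).exists_infDist_eq_dist
      (by exact_mod_cast hTne) x
  choose g hgT hgd using hT
  -- each point of P has infDist ≤ cost T
  have hbdd : BddAbove ((fun p => Metric.infDist p (T : Set X)) '' (P : Set X)) :=
    (P.finite_toSet.image _).bddAbove
  have hle : ∀ x ∈ P, Metric.infDist x (T : Set X) ≤ kcCost P (T : Set X) := by
    intro x hx
    exact le_csSup hbdd ⟨x, by exact_mod_cast hx, rfl⟩
  -- pigeonhole on insert pS S
  have hcardlt : T.card < (insert pS S).card := by
    rw [Finset.card_insert_of_notMem hpSS, hScard]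
    omega
  have hmaps : ∀ a ∈ insert pS S, g a ∈ T := by
    intro a _
    exact_mod_cast hgT a
  obtain ⟨x, hx, y, hy, hxy, hgxy⟩ :=
    Finset.exists_ne_map_eq_of_card_lt_of_maps_to hcardlt hmaps
  have hxP : x ∈ P := (Finset.insert_subset hpSP hSsub) hx
  have hyP : y ∈ P := (Finset.insert_subset hpSP hSsub) hy
  have hxA : x ∈ insert pS (S : Set X) := by
    simpa [Finset.coe_insert] using hx
  have hyA : y ∈ insert pS (S : Set X) := by
    simpa [Finset.coe_insert] using hy
  have hsepxy : r < dist x y := hsep x hxA y hyA hxy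
  have htri : dist x y ≤ dist x (g x) + dist y (g y) := by
    calc dist x y ≤ dist x (g x) + dist (g x) y := dist_triangle _ _ _
    _ = dist x (g x) + dist y (g y) := by rw [hgxy, dist_comm (g y) y]
  have h1 : dist x (g x) ≤ kcCost P (T : Set X) := (hgd x).symm.le.trans (hle x hxP)
  have h2 : dist y (g y) ≤ kcCost P (T : Set X) := (hgd y).symm.le.trans (hle y hyP)
  linarith
end

section
/- Let (X, dist) be a metric space, P ⊆ X a finite set of points, k ≥ 1 an integer, and r̂ > 0. Suppose S ⊆ P with |S| = k satisfies: (i) there exists a point p_S ∈ P \ S such that the pairwise distances between distinct points of S ∪ {p_S} are at least r̂, and (ii) every point p ∈ P has dist(p, S) ≤ 3r̂. Then S is a 6-approximate k-center solution: for every nonempty T ⊆ P with |T| ≤ k, max_{p ∈ P} dist(p, S) ≤ 6 · max_{p ∈ P} dist(p, T). -/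
/-- If `|S| = k`, there is `p_S ∈ P \ S` with the pairwise distances of
`S ∪ {p_S}` at least `r̂`, and `S` covers `P` within radius `3r̂`, then `S` is a
`6`-approximate `k`-center solution (decremental algorithm guarantee). -/
theorem decremental_six_approx
    {X : Type*} [MetricSpace X] (P : Finset X) (k : ℕ) (hk : 1 ≤ k)
    (rhat : ℝ) (hr : 0 < rhat)
    (S : Finset X) (hSsub : S ⊆ P) (hScard : S.card = k)
    (pS : X) (hpSP : pS ∈ P) (hpSS : pS ∉ S)
    (hsep : ∀ x ∈ insert pS (S : Set X), ∀ y ∈ insert pS (S : Set X), x ≠ y → rhat ≤ dist x y)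
    (hcov : ∀ p ∈ P, Metric.infDist p (S : Set X) ≤ 3 * rhat) :
    ∀ T : Finset X, T ⊆ P → T.Nonempty → T.card ≤ k →
      kcCost P (S : Set X) ≤ 6 * kcCost P (T : Set X) := by
  intro T hTP hTne hTcard
  -- nearest point in T to each x
  have hnear : ∀ x : X, ∃ t ∈ T, Metric.infDist x (T : Set X) = dist x t := by
    intro x
    obtain ⟨t, htT, hmin⟩ := T.exists_min_image (fun t => dist x t) hTne
    refine ⟨t, htT, le_antisymm (Metric.infDist_le_dist_of_mem htT) ?_⟩
    by_contra h
    obtain ⟨y, hyT, hlt⟩ := (Metric.infDist_lt_iff ⟨t, htT⟩).mp (lt_of_not_ge h)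
    exact absurd (hmin y hyT) (not_le.mpr hlt)
  classical
  choose f hfT hfd using hnear
  -- pigeonhole on insert pS S
  have hcard : T.card < (insert pS S).card := by
    rw [Finset.card_insert_of_notMem hpSS, hScard]
    omega
  obtain ⟨x, hx, y, hy, hxy, hfxy⟩ :=
    Finset.exists_ne_map_eq_of_card_lt_of_maps_to hcard (fun x _ => hfT x)
  have hxP : x ∈ P := by
    rcases Finset.mem_insert.mp hx with h | h
    · exact h ▸ hpSP
    · exact hSsub h
  have hyP : y ∈ P := by
    rcases Finset.mem_insert.mp hy with h | h
    · exact h ▸ hpSP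
    · exact hSsub h
  have hx' : x ∈ insert pS (S : Set X) := by
    simpa using hx
  have hy' : y ∈ insert pS (S : Set X) := by
    simpa using hy
  have hsum : rhat ≤ Metric.infDist x (T : Set X) + Metric.infDist y (T : Set X) := by
    calc rhat ≤ dist x y := hsep x hx' y hy' hxy
    _ ≤ dist x (f x) + dist y (f x) := by
        have := dist_triangle x (f x) y
        rw [dist_comm (f x) y] at this; linarith
    _ = Metric.infDist x (T : Set X) + Metric.infDist y (T : Set X) := by
        rw [hfd x, hfd y, hfxy]
  have hbdd : BddAbove ((fun p => Metric.infDist p (T : Set X)) '' (P : Set X)) :=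
    (P.finite_toSet.image _).bddAbove
  have hhalf : rhat / 2 ≤ kcCost P (T : Set X) := by
    rcases le_total (Metric.infDist x (T : Set X)) (Metric.infDist y (T : Set X)) with h | h
    · have : rhat / 2 ≤ Metric.infDist y (T : Set X) := by linarith
      exact this.trans (le_csSup hbdd ⟨y, hyP, rfl⟩)
    · have : rhat / 2 ≤ Metric.infDist x (T : Set X) := by linarith
      exact this.trans (le_csSup hbdd ⟨x, hxP, rfl⟩)
  have hS3 : kcCost P (S : Set X) ≤ 3 * rhat := by
    apply Real.sSup_le
    · rintro _ ⟨p, hp, rfl⟩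
      exact hcov p hp
    · positivity
  linarith
end

section
/- Let (X, dist) be a metric space, P ⊆ X a finite set of points, k ≥ 1 an integer, and r > 0. Suppose S ⊆ P with |S| = k and there exists a point p_S ∈ P \ S such that the pairwise distances between distinct points of S ∪ {p_S} are strictly greater than r. Let T ⊆ P be any nonempty subset with |T| ≤ k and let R = max_{p ∈ P} dist(p, T). If every point p ∈ P has dist(p, S) ≤ 2R + 2r, then every point p ∈ P has dist(p, S) ≤ 6R; that is, S is a 6-approximate k-center solution. -/
/-- If `|S| = k`, there is `p_S ∈ P \ S` with the pairwise distances of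
`S ∪ {p_S}` strictly greater than `r`, and for some feasible `T ⊆ P` with covering
radius `R = kcCost P T` every point of `P` is within `2R + 2r` of `S`, then every
point of `P` is within `6R` of `S` (incremental algorithm guarantee). -/
theorem incremental_six_approx
    {X : Type*} [MetricSpace X] (P : Finset X) (k : ℕ) (hk : 1 ≤ k)
    (r : ℝ) (hr : 0 < r)
    (S : Finset X) (hSsub : S ⊆ P) (hScard : S.card = k)
    (pS : X) (hpSP : pS ∈ P) (hpSS : pS ∉ S)
    (hsep : ∀ x ∈ insert pS (S : Set X), ∀ y ∈ insert pS (S : Set X), x ≠ y → r < dist x y) :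
    ∀ T : Finset X, T ⊆ P → T.Nonempty → T.card ≤ k →
      (∀ p ∈ P, Metric.infDist p (S : Set X) ≤ 2 * kcCost P (T : Set X) + 2 * r) →
      ∀ p ∈ P, Metric.infDist p (S : Set X) ≤ 6 * kcCost P (T : Set X) := by
  classical
  intro T hTP hTne hTcard hcov p hpP
  set R := kcCost P (T : Set X) with hR
  -- every point of P is within R of T
  have hle : ∀ q ∈ P, Metric.infDist q (T : Set X) ≤ R := by
    intro q hq
    apply le_csSup
    · exact (P.finite_toSet.image _).bddAbove
    · exact ⟨q, hq, rfl⟩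
  -- nearest center in T
  have hnear : ∀ q ∈ P, ∃ t ∈ T, dist q t ≤ R := by
    intro q hq
    obtain ⟨t, htT, heq⟩ := (T.finite_toSet.isCompact).exists_infDist_eq_dist
      (Finset.coe_nonempty.mpr hTne) q
    exact ⟨t, htT, heq ▸ hle q hq⟩
  -- the set Q = insert pS S has k+1 points
  set Q : Finset X := insert pS S with hQ
  have hQcard : Q.card = k + 1 := by
    rw [hQ, Finset.card_insert_of_notMem hpSS, hScard]
  have hQP : Q ⊆ P := by
    intro x hx
    rcases Finset.mem_insert.mp hx with h | h
    · exact h ▸ hpSP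
    · exact hSsub h
  -- choose for each q ∈ Q a center in T
  choose! f hfT hfd using hnear
  have hmaps : ∀ q ∈ Q, f q ∈ T := fun q hq => hfT q (hQP hq)
  have hlt : T.card < Q.card := by omega
  obtain ⟨x, hx, y, hy, hxy, hfxy⟩ :=
    Finset.exists_ne_map_eq_of_card_lt_of_maps_to hlt hmaps
  -- r < 2R
  have hxQ : x ∈ insert pS (S : Set X) := by
    simpa [hQ, Finset.coe_insert] using (Finset.mem_coe.mpr hx)
  have hyQ : y ∈ insert pS (S : Set X) := by
    simpa [hQ, Finset.coe_insert] using (Finset.mem_coe.mpr hy)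
  have h1 : r < dist x y := hsep x hxQ y hyQ hxy
  have h2 : dist x y ≤ dist x (f x) + dist (f y) y := by
    calc dist x y ≤ dist x (f x) + dist (f x) y := dist_triangle _ _ _
    _ = dist x (f x) + dist (f y) y := by rw [hfxy, dist_comm]
  have hx' := hfd x (hQP hx)
  have hy' := hfd y (hQP hy)
  rw [dist_comm (f y) y] at h2
  have hr2R : r < 2 * R := by linarith
  have := hcov p hpP
  linarith
end

section
/- Let (X, dist) be a metric space, P ⊆ X a finite set of points, and k ≥ 1 an integer. Suppose S ⊆ P with |S| = k and there exists a point p_S ∈ P \ S such that the pairwise distances between distinct points of S ∪ {p_S} are strictly greater than r. Then for every nonempty T ⊆ P with |T| ≤ k and covering radius R = max_{p ∈ P} dist(p, T), it holds that 2r < 4R; i.e., the radius r^{(δ)} = 2r^{(δ−1)} maintained by the incremental algorithm is at most 4 times the optimal k-center cost of P. -/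
/-- If `|S| = k` and there is `p_S ∈ P \ S` such that the pairwise
distances of `S ∪ {p_S}` are strictly greater than `r`, then for every feasible
`T ⊆ P` with covering radius `R = kcCost P T` it holds that `2r < 4R`
(the incremental algorithm's radius is at most `4` times the optimal cost). -/
theorem incremental_radius_lt_four_opt
    {X : Type*} [MetricSpace X] (P : Finset X) (k : ℕ) (hk : 1 ≤ k)
    (r : ℝ)
    (S : Finset X) (hSsub : S ⊆ P) (hScard : S.card = k)
    (pS : X) (hpSP : pS ∈ P) (hpSS : pS ∉ S)
    (hsep : ∀ x ∈ insert pS (S : Set X), ∀ y ∈ insert pS (S : Set X), x ≠ y → r < dist x y) :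
    ∀ T : Finset X, T ⊆ P → T.Nonempty → T.card ≤ k →
      2 * r < 4 * kcCost P (T : Set X) := by
  classical
  intro T hTsub hTne hTcard
  set R := kcCost P (T : Set X) with hR
  -- every point of P is within R of some point of T
  have hcover : ∀ p ∈ P, ∃ t ∈ T, dist p t ≤ R := by
    intro p hp
    have hcompact : IsCompact (T : Set X) := (T.finite_toSet).isCompact
    have hTne' : (T : Set X).Nonempty := by exact_mod_cast hTne
    obtain ⟨t, ht, hdist⟩ := hcompact.exists_infDist_eq_dist hTne' p
    refine ⟨t, ht, ?_⟩
    rw [← hdist]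
    apply le_csSup
    · exact ((P.finite_toSet).image _).bddAbove
    · exact ⟨p, hp, rfl⟩
  -- choose a nearest center for each point
  choose f hf hfd using hcover
  -- pigeonhole on insert pS S → T
  have hcard : T.card < (insert pS S).card := by
    rw [Finset.card_insert_of_notMem hpSS, hScard]
    omega
  have hmaps : ∀ x ∈ insert pS S, ∀ hx : x ∈ P, f x hx ∈ T := fun x _ hx => hf x hx
  have hmem : ∀ x ∈ insert pS S, x ∈ P := by
    intro x hx
    rcases Finset.mem_insert.mp hx with h | h
    · exact h ▸ hpSP
    · exact hSsub h
  obtain ⟨x, hx, y, hy, hxy, hfeq⟩ :=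
    Finset.exists_ne_map_eq_of_card_lt_of_maps_to hcard
      (f := fun x => if hx : x ∈ P then f x hx else pS)
      (by intro x hx; simp only [hmem x hx, dif_pos]; exact hf x (hmem x hx))
  have hxP := hmem x hx
  have hyP := hmem y hy
  simp only [dif_pos hxP, dif_pos hyP] at hfeq
  have hsepxy : r < dist x y := by
    apply hsep x (by simpa using hx) y (by simpa using hy) hxy
  have htri : dist x y ≤ dist x (f x hxP) + dist y (f y hyP) := by
    calc dist x y ≤ dist x (f x hxP) + dist (f x hxP) y := dist_triangle _ _ _
    _ = dist x (f x hxP) + dist y (f y hyP) := by rw [hfeq, dist_comm, dist_comm (f y hyP) y]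
  have : r < 2 * R := lt_of_lt_of_le hsepxy (htri.trans (by linarith [hfd x hxP, hfd y hyP]))
  linarith
end

section
/- Let (X, dist) be a metric space, P ⊆ X a finite set of points, and k ≥ 1 an integer. Suppose S ⊆ P with |S| = k and there exists a point p_S ∈ P \ S such that the pairwise distances between distinct points of S ∪ {p_S} are strictly greater than r. Then for every nonempty T ⊆ P with |T| ≤ k and covering radius R = max_{p ∈ P} dist(p, T), it holds that 5r ≤ 10R; i.e., the radius r^{(δ)} = 5r^{(δ−1)} maintained by the fully dynamic algorithm is at most 10 times the optimal k-center cost of P. -/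
/-- If `|S| = k` and there is `p_S ∈ P \ S` such that the pairwise
distances of `S ∪ {p_S}` are strictly greater than `r`, then for every feasible
`T ⊆ P` with covering radius `R = kcCost P T` it holds that `5r ≤ 10R`
(the fully dynamic algorithm's radius is at most `10` times the optimal cost). -/
theorem fully_dynamic_radius_le_ten_opt
    {X : Type*} [MetricSpace X] (P : Finset X) (k : ℕ) (hk : 1 ≤ k)
    (r : ℝ)
    (S : Finset X) (hSsub : S ⊆ P) (hScard : S.card = k)
    (pS : X) (hpSP : pS ∈ P) (hpSS : pS ∉ S)
    (hsep : ∀ x ∈ insert pS (S : Set X), ∀ y ∈ insert pS (S : Set X), x ≠ y → r < dist x y) :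
    ∀ T : Finset X, T ⊆ P → T.Nonempty → T.card ≤ k →
      5 * r ≤ 10 * kcCost P (T : Set X) := by
  classical
  intro T hTsub hTne hTcard
  set R := kcCost P (T : Set X) with hR
  -- every point of P is within R of T
  have hbdd : BddAbove ((fun p => Metric.infDist p (T : Set X)) '' (P : Set X)) :=
    (P.finite_toSet.image _).bddAbove
  have hcover : ∀ p ∈ P, Metric.infDist p (T : Set X) ≤ R := by
    intro p hp
    exact le_csSup hbdd ⟨p, hp, rfl⟩
  -- nearest-center map
  have hnear : ∀ p : X, ∃ c ∈ T, dist p c = Metric.infDist p (T : Set X) := by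
    intro p
    obtain ⟨c, hc, hdc⟩ := (T.finite_toSet.isCompact).exists_infDist_eq_dist
      (Finset.coe_nonempty.2 hTne) p
    exact ⟨c, hc, hdc.symm⟩
  choose f hfT hfd using hnear
  -- pigeonhole on insert pS S
  have hcard : T.card < (insert pS S).card := by
    rw [Finset.card_insert_of_notMem hpSS, hScard]
    omega
  have hmaps : ∀ x ∈ insert pS S, f x ∈ T := fun x _ => hfT x
  obtain ⟨x, hx, y, hy, hxy, hfxy⟩ :=
    Finset.exists_ne_map_eq_of_card_lt_of_maps_to hcard hmaps
  have hxP : x ∈ P := by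
    rcases Finset.mem_insert.mp hx with h | h
    · exact h ▸ hpSP
    · exact hSsub h
  have hyP : y ∈ P := by
    rcases Finset.mem_insert.mp hy with h | h
    · exact h ▸ hpSP
    · exact hSsub h
  have hx' : x ∈ insert pS (S : Set X) := by
    simpa using hx
  have hy' : y ∈ insert pS (S : Set X) := by
    simpa using hy
  have hr : r < dist x y := hsep x hx' y hy' hxy
  have h1 : dist x (f x) ≤ R := (hfd x).symm ▸ hcover x hxP
  have h2 : dist y (f y) ≤ R := (hfd y).symm ▸ hcover y hyP
  have : dist x y ≤ dist x (f x) + dist (f x) y := dist_triangle _ _ _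
  rw [hfxy, dist_comm (f y) y] at this
  rw [hfxy] at h1
  nlinarith
end

section
/- Let (X, dist) be a metric space, P ⊆ X a finite set of points, and k ≥ 2 an integer. Suppose S ⊆ P with |S| = k, let d = min over distinct x, y ∈ S of dist(x, y) be the minimum pairwise distance of the centers, and suppose there exists a point p ∈ P \ S with dist(p, S) ≥ d. Then for every nonempty T ⊆ P with |T| ≤ k and covering radius R = max_{p ∈ P} dist(p, T), it holds that d ≤ 2R; i.e., the minimum pairwise distance of the k centers is at most twice the optimal k-center cost whenever some point of P lies at distance at least d from all centers. -/
/-- Let `S ⊆ P` with `|S| = k ≥ 2`, let `d` be the minimum pairwise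
distance among the centers of `S`, and suppose some point `p ∈ P \ S` has
`dist(p, S) ≥ d`. Then for every feasible `T ⊆ P` with covering radius
`R = kcCost P T` it holds that `d ≤ 2R`. -/
theorem min_pairwise_distance_le_two_opt
    {X : Type*} [MetricSpace X] (P : Finset X) (k : ℕ) (hk : 2 ≤ k)
    (S : Finset X) (hSsub : S ⊆ P) (hScard : S.card = k)
    (d : ℝ) (hd : d = sInf {e : ℝ | ∃ x ∈ S, ∃ y ∈ S, x ≠ y ∧ e = dist x y})
    (p : X) (hpP : p ∈ P) (hpS : p ∉ S)
    (hfar : d ≤ Metric.infDist p (S : Set X)) :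
    ∀ T : Finset X, T ⊆ P → T.Nonempty → T.card ≤ k →
      d ≤ 2 * kcCost P (T : Set X) := by
  classical
  intro T hTsub hTne hTcard
  set R := kcCost P (T : Set X) with hR
  -- every point of P is within R of T
  have hbdd : BddAbove ((fun q => Metric.infDist q (T : Set X)) '' (P : Set X)) :=
    (P.finite_toSet.image _).bddAbove
  have hcov : ∀ q ∈ P, Metric.infDist q (T : Set X) ≤ R := by
    intro q hq
    exact le_csSup hbdd ⟨q, by exact_mod_cast hq, rfl⟩
  -- nearest center in T
  have hTne' : (T : Set X).Nonempty := by exact_mod_cast hTne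
  have hnear : ∀ q : X, ∃ t ∈ T, Metric.infDist q (T : Set X) = dist q t := by
    intro q
    obtain ⟨t, ht, hdist⟩ :=
      T.finite_toSet.isCompact.exists_infDist_eq_dist hTne' q
    exact ⟨t, by exact_mod_cast ht, hdist⟩
  -- d ≤ dist a b for distinct a b in insert p S
  have hsep : ∀ a ∈ insert p S, ∀ b ∈ insert p S, a ≠ b → d ≤ dist a b := by
    have hS : ∀ x ∈ S, ∀ y ∈ S, x ≠ y → d ≤ dist x y := by
      intro x hx y hy hxy
      rw [hd]
      apply csInf_le
      · refine ⟨0, ?_⟩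
        rintro e ⟨u, _, v, _, _, rfl⟩
        exact dist_nonneg
      · exact ⟨x, hx, y, hy, hxy, rfl⟩
    have hp : ∀ y ∈ S, d ≤ dist p y := by
      intro y hy
      exact hfar.trans (Metric.infDist_le_dist_of_mem (by exact_mod_cast hy))
    intro a ha b hb hab
    rcases Finset.mem_insert.1 ha with rfl | haS
    · rcases Finset.mem_insert.1 hb with rfl | hbS
      · exact absurd rfl hab
      · exact hp b hbS
    · rcases Finset.mem_insert.1 hb with rfl | hbS
      · rw [dist_comm]; exact hp a haS
      · exact hS a haS b hbS hab
  -- pigeonhole: two of the k+1 points share a nearest center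
  choose f hfT hfd using hnear
  have hcard : T.card < (insert p S).card := by
    rw [Finset.card_insert_of_notMem hpS, hScard]
    omega
  obtain ⟨a, ha, b, hb, hab, hfab⟩ :=
    Finset.exists_ne_map_eq_of_card_lt_of_maps_to hcard (fun q _ => hfT q)
  have haP : a ∈ P := by
    rcases Finset.mem_insert.1 ha with rfl | h; exact hpP; exact hSsub h
  have hbP : b ∈ P := by
    rcases Finset.mem_insert.1 hb with rfl | h; exact hpP; exact hSsub h
  calc d ≤ dist a b := hsep a ha b hb hab
    _ ≤ dist a (f a) + dist b (f a) := dist_triangle_right a b (f a)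
    _ = Metric.infDist a (T : Set X) + Metric.infDist b (T : Set X) := by
        rw [← hfd a, hfab, ← hfd b]
    _ ≤ R + R := add_le_add (hcov a haP) (hcov b hbP)
    _ = 2 * R := by ring
end
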